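/- arXiv:1808.08625 — 4 statements merged into one kernel-verified Lean document; each statement's English description precedes it below -/
import Mathlib

section
/- A 4×4 complex matrix μ satisfies conj(μ)ᵀ · H + H · μ = 0 if and only if there exist real numbers κ, ψ, ρ, τ and complex numbers λ, η, ζ, ξ, φ₁, φ₂ such that μ has rows (λ, −i·conj ξ, −i·conj φ₂, ψ), (η, iρ, −conj φ₁, ξ), (ζ, εφ₁, iτ, εφ₂), (κ, i·conj η, ε i·conj ζ, −conj λ). -/
open Matrix Complex ComplexConjugate

/-- The Hermitian form matrix `H` with `H₀₃ = i`, `H₃₀ = -i`, `H₁₁ = 1`, `H₂₂ = ε`. -/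
noncomputable def Hmat (ε : ℂ) : Matrix (Fin 4) (Fin 4) ℂ :=
  !![0, 0, 0, I;
     0, 1, 0, 0;
     0, 0, ε, 0;
     -I, 0, 0, 0]

/-- The matrix `μ` of equation (4.2), built from real `κ, ψ, ρ, τ` and
complex `λ, η, ζ, ξ, φ₁, φ₂`. -/
noncomputable def muMat (ε : ℂ) (κ ψ ρ τ : ℝ) (lam η ζ ξ φ₁ φ₂ : ℂ) :
    Matrix (Fin 4) (Fin 4) ℂ :=
  !![lam, -I * conj ξ, -I * conj φ₂, (ψ : ℂ);
     η, I * ρ, -conj φ₁, ξ;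
     ζ, ε * φ₁, I * τ, ε * φ₂;
     (κ : ℂ), I * conj η, ε * I * conj ζ, -conj lam]

set_option maxHeartbeats 1000000 in
/-- `μ` satisfies `conj(μ)ᵀ H + H μ = 0` iff it has the form `muMat`. -/
theorem stmt3 (ε : ℂ) (hε : ε = 1 ∨ ε = -1) (μ : Matrix (Fin 4) (Fin 4) ℂ) :
    μᴴ * Hmat ε + Hmat ε * μ = 0 ↔
      ∃ (κ ψ ρ τ : ℝ) (lam η ζ ξ φ₁ φ₂ : ℂ),
        μ = muMat ε κ ψ ρ τ lam η ζ ξ φ₁ φ₂ := by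

  constructor
  · intro h
    have hε2 : ε * ε = 1 := by rcases hε with h | h <;> simp [h]
    have hεc : conj ε = ε := by rcases hε with h | h <;> simp [h]
    have e : ∀ i j, (μᴴ * Hmat ε + Hmat ε * μ) i j = 0 := fun i j => by rw [h]; rfl
    have e00 := e 0 0
    have e01 := e 0 1
    have e02 := e 0 2
    have e03 := e 0 3
    have e11 := e 1 1
    have e12 := e 1 2
    have e13 := e 1 3
    have e22 := e 2 2
    have e23 := e 2 3
    have e33 := e 3 3
    simp [Hmat, Matrix.mul_apply, Fin.sum_univ_four, conjTranspose_apply, vecHead, vecTail,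
      Matrix.vecMul, dotProduct] at e00 e01 e02 e03 e11 e12 e13 e22 e23 e33
    have c13 := congrArg (starRingEnd ℂ) e13
    have c23 := congrArg (starRingEnd ℂ) e23
    simp only [map_add, _root_.map_mul, map_zero, Complex.conj_conj, Complex.conj_I, hεc] at c13 c23
    -- real/imaginary facts
    have h30 : conj (μ 3 0) = μ 3 0 := by linear_combination I * e00 + ((starRingEnd ℂ) (μ 3 0) - μ 3 0) * Complex.I_sq
    have h03 : conj (μ 0 3) = μ 0 3 := by linear_combination -I * e33 + ((starRingEnd ℂ) (μ 0 3) - μ 0 3) * Complex.I_sq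
    have h11 : conj (μ 1 1) = -μ 1 1 := by linear_combination e11
    have h22 : conj (μ 2 2) = -μ 2 2 := by
      linear_combination ε * e22 - (conj (μ 2 2) + μ 2 2) * hε2
    have r11 : (μ 1 1).re = 0 := by
      have := congrArg Complex.re h11
      simp at this; linarith
    have r22 : (μ 2 2).re = 0 := by
      have := congrArg Complex.re h22
      simp at this; linarith
    refine ⟨(μ 3 0).re, (μ 0 3).re, (μ 1 1).im, (μ 2 2).im, μ 0 0, μ 1 0, μ 2 0, μ 1 3,
      ε * μ 2 1, ε * μ 2 3, ?_⟩
    ext i j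
    fin_cases i <;> fin_cases j <;>
      simp [muMat, vecHead, vecTail, hεc, _root_.map_mul]
    · linear_combination I * c13 + μ 0 1 * Complex.I_sq
    · linear_combination I * c23 + μ 0 2 * Complex.I_sq
    · exact (Complex.conj_eq_iff_re.mp h03).symm
    · exact Complex.ext (by simp [r11]) (by simp)
    · linear_combination e12
    · linear_combination -(μ 2 1) * hε2
    · exact Complex.ext (by simp [r22]) (by simp)
    · linear_combination -(μ 2 3) * hε2
    · exact (Complex.conj_eq_iff_re.mp h30).symm
    · linear_combination -I * e01 + μ 3 1 * Complex.I_sq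
    · linear_combination -I * e02 + μ 3 2 * Complex.I_sq
    · linear_combination -I * e03 + (μ 3 3 + (starRingEnd ℂ) (μ 0 0)) * Complex.I_sq
  · rintro ⟨κ, ψ, ρ, τ, lam, η, ζ, ξ, φ₁, φ₂, rfl⟩
    rcases hε with rfl | rfl <;>
    · ext i j
      fin_cases i <;> fin_cases j <;>
        simp [Hmat, muMat, Matrix.mul_apply, Fin.sum_univ_four, conjTranspose_apply,
          _root_.map_mul, vecHead, vecTail] <;> ring_nf <;> simp [Complex.I_sq]
end

section
/- Let V and W be 4×4 complex matrices with conj(V)ᵀ · H · V = H and conj(W)ᵀ · H · W = H, and suppose there exists l ∈ ℂ, l ≠ 0, such that the 0th column of W equals l times the 0th column of V. Then there exist a₁, a₂, c₁, c₂ ∈ ℂ and r, t ∈ ℝ with |a₁|² + ε|a₂|² = 1 such that W = V · p_l · p₀, where p_l = diag(l, 1, 1, (conj l)⁻¹) and p₀ is the matrix with rows (1, −i(a₁·conj c₁ + ε a₂·conj c₂), ε i e^{ir}(conj a₂·conj c₁ − conj a₁·conj c₂), c₀), (0, a₁, −ε e^{ir}·conj a₂, c₁), (0, a₂, e^{ir}·conj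 a₁, c₂), (0, 0, 0, 1) and c₀ = t − (i/2)(|c₁|² + ε|c₂|²). -/
/-!
`Q := (V p_l)⁻¹ W` preserves the Hermitian form `H` and fixes `e₀`, so it suffices to read off
`Qᴴ H Q = H` entry by entry. The `(0, j)` entries force the last row of `Q` to be `e₃`; the middle
`2 × 2` block is then an isometry of `diag(1, ε)`, hence `[[a₁, -ε μ conj a₂], [a₂, μ conj a₁]]`
with `|μ| = 1`; the `(1, 3)` and `(2, 3)` entries determine `Q₀₁, Q₀₂`, and the `(3, 3)` entry
fixes the imaginary part of `Q₀₃`.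
-/

open Matrix Complex ComplexConjugate

/-- The matrix `p₀`, with `c₀ = t - (i/2)(|c₁|² + ε|c₂|²)`. -/
noncomputable def p0 (ε a₁ a₂ c₁ c₂ : ℂ) (r t : ℝ) : Matrix (Fin 4) (Fin 4) ℂ :=
  !![1, -I * (a₁ * conj c₁ + ε * a₂ * conj c₂),
       ε * I * Complex.exp (I * r) * (conj a₂ * conj c₁ - conj a₁ * conj c₂),
       (t : ℂ) - I / 2 * ((‖c₁‖ : ℂ) ^ 2 + ε * (‖c₂‖ : ℂ) ^ 2);
     0, a₁, -ε * Complex.exp (I * r) * conj a₂, c₁;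
     0, a₂, Complex.exp (I * r) * conj a₁, c₂;
     0, 0, 0, 1]

/-- The diagonal matrix `p_l = diag(l, 1, 1, (conj l)⁻¹)`. -/
noncomputable def pl (l : ℂ) : Matrix (Fin 4) (Fin 4) ℂ :=
  diagonal ![l, 1, 1, (conj l)⁻¹]

section FormPreserving

variable {n R : Type*} [Fintype n] [CommRing R]

section Star

variable [StarRing R]

theorem conjTranspose_mul_mul_eq_of_mul {M A B : Matrix n n R} (hA : Aᴴ * M * A = M)
    (hB : Bᴴ * M * B = M) : (A * B)ᴴ * M * (A * B) = M := by
  calc (A * B)ᴴ * M * (A * B) = Bᴴ * (Aᴴ * M * A) * B := by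
        simp only [conjTranspose_mul, Matrix.mul_assoc]
    _ = M := by rw [hA, hB]

variable [DecidableEq n]

theorem isUnit_det_of_conjTranspose_mul_mul_eq {M A : Matrix n n R} (hM : IsUnit M.det)
    (hA : Aᴴ * M * A = M) : IsUnit A.det := by
  have : IsUnit (star A.det * M.det * A.det) := by
    rwa [← det_conjTranspose, ← det_mul, ← det_mul, hA]
  exact isUnit_of_mul_isUnit_right this

theorem conjTranspose_mul_mul_eq_of_inv {M A : Matrix n n R} (hdet : IsUnit A.det)
    (hA : Aᴴ * M * A = M) : (A⁻¹)ᴴ * M * A⁻¹ = M := by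
  have hdetH : IsUnit Aᴴ.det := by rwa [det_conjTranspose, isUnit_star]
  conv_lhs => rw [← hA]
  rw [Matrix.mul_assoc, Matrix.mul_assoc, mul_nonsing_inv _ hdet, Matrix.mul_one,
    ← Matrix.mul_assoc, conjTranspose_nonsing_inv, nonsing_inv_mul _ hdetH, Matrix.one_mul]

end Star

theorem inv_mul_apply_of_apply_eq [DecidableEq n] {A W : Matrix n n R} (hdet : IsUnit A.det)
    {j : n} (h : ∀ i, W i j = A i j) (i : n) : (A⁻¹ * W) i j = (1 : Matrix n n R) i j := by
  simp_rw [Matrix.mul_apply, h, ← Matrix.mul_apply, nonsing_inv_mul _ hdet]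

end FormPreserving

theorem det_Hmat (ε : ℂ) : (Hmat ε).det = -ε := by
  have : Fin.succAbove (3 : Fin 4) 2 = 2 := rfl
  simp [Hmat, det_succ_row_zero, Fin.sum_univ_succ, this]
  linear_combination -ε * I_mul_I

theorem conjTranspose_mul_Hmat_mul_apply (ε : ℂ) (P : Matrix (Fin 4) (Fin 4) ℂ) (i j : Fin 4) :
    (Pᴴ * Hmat ε * P) i j = I * (conj (P 0 i) * P 3 j - conj (P 3 i) * P 0 j)
      + conj (P 1 i) * P 1 j + ε * conj (P 2 i) * P 2 j := by
  simp [Hmat, Matrix.mul_apply, Fin.sum_univ_four]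
  ring

theorem conjTranspose_pl_mul_Hmat_mul_pl (ε : ℂ) {l : ℂ} (hl : l ≠ 0) :
    (pl l)ᴴ * Hmat ε * pl l = Hmat ε := by
  ext i j
  rw [conjTranspose_mul_Hmat_mul_apply]
  fin_cases i <;> fin_cases j <;> simp [pl, Hmat, hl]

theorem exists_exp_of_orthonormal {ε a₁ a₂ x y : ℂ} (hε : ε = 1 ∨ ε = -1)
    (h₁₁ : conj a₁ * a₁ + ε * conj a₂ * a₂ = 1) (h₁₂ : conj a₁ * x + ε * conj a₂ * y = 0)
    (h₂₂ : conj x * x + ε * conj y * y = ε) :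
    ∃ r : ℝ, x = -ε * exp (I * r) * conj a₂ ∧ y = exp (I * r) * conj a₁ := by
  have hεε : ε * ε = 1 := by rcases hε with rfl | rfl <;> norm_num
  have hεc : conj ε = ε := by rcases hε with rfl | rfl <;> simp
  -- The J-orthogonal complement of `(a₁, a₂)`, `J = diag(1, ε)`, is spanned by
  -- `(-ε conj a₂, conj a₁)`, and the coefficient of `(x, y)` is the determinant `a₁ y - a₂ x`.
  set μ := a₁ * y - a₂ * x
  have hx : x = -ε * μ * conj a₂ := by linear_combination (-x) * h₁₁ + a₁ * h₁₂
  have hy : y = μ * conj a₁ := by linear_combination (-y) * h₁₁ + a₂ * h₁₂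
  have hμ : ‖μ‖ = 1 := by
    have hcx : conj x = -ε * conj μ * a₂ := by rw [hx]; simp [hεc]
    have hcy : conj y = conj μ * a₁ := by rw [hy]; simp
    rw [hcx, hcy, hx, hy] at h₂₂
    have : (‖μ‖ : ℂ) ^ 2 = 1 := by
      rw [← conj_mul']
      linear_combination ε * h₂₂ - ε ^ 2 * conj μ * μ * h₁₁ - (conj μ * μ - 1) * hεε
    exact (pow_eq_one_iff_of_nonneg (norm_nonneg μ) two_ne_zero).1 (by exact_mod_cast this)
  obtain ⟨r, hr⟩ := (Complex.norm_eq_one_iff μ).1 hμ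
  exact ⟨r, by rw [mul_comm I, hr, hx], by rw [mul_comm I, hr, hy]⟩

theorem eq_neg_I_mul_conj_of_I_mul_conj_add_eq_zero {z w : ℂ} (h : I * conj z + w = 0) :
    z = -I * conj w := by
  have h' := congrArg conj h
  simp only [map_add, map_mul, conj_I, conj_conj, map_zero] at h'
  linear_combination I * h' + z * I_mul_I

theorem eq_re_sub_of_I_mul_conj_sub_add_eq_zero {z s : ℂ} (h : I * (conj z - z) + s = 0) :
    z = z.re - I / 2 * s := by
  have hsub := Complex.sub_conj z
  push_cast at hsub
  linear_combination (I / 2) * h - (1 / 2) * hsub - (conj z - z) / 2 * I_mul_I - re_add_im z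

theorem exists_eq_p0_of_conjTranspose_mul_Hmat_mul_eq {ε : ℂ} (hε : ε = 1 ∨ ε = -1)
    {Q : Matrix (Fin 4) (Fin 4) ℂ} (hQ : Qᴴ * Hmat ε * Q = Hmat ε)
    (hcol : ∀ i, Q i 0 = (1 : Matrix (Fin 4) (Fin 4) ℂ) i 0) :
    ∃ (a₁ a₂ c₁ c₂ : ℂ) (r t : ℝ),
      (‖a₁‖ : ℂ) ^ 2 + ε * (‖a₂‖ : ℂ) ^ 2 = 1 ∧ Q = p0 ε a₁ a₂ c₁ c₂ r t := by
  have hεc : conj ε = ε := by rcases hε with rfl | rfl <;> simp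
  have e (i j : Fin 4) : I * (conj (Q 0 i) * Q 3 j - conj (Q 3 i) * Q 0 j)
      + conj (Q 1 i) * Q 1 j + ε * conj (Q 2 i) * Q 2 j = Hmat ε i j := by
    rw [← conjTranspose_mul_Hmat_mul_apply, hQ]
  have h00 : Q 0 0 = 1 := hcol 0
  have h10 : Q 1 0 = 0 := hcol 1
  have h20 : Q 2 0 = 0 := hcol 2
  have h30 : Q 3 0 = 0 := hcol 3
  have h31 : Q 3 1 = 0 := by simpa [h00, h10, h20, h30, Hmat] using e 0 1
  have h32 : Q 3 2 = 0 := by simpa [h00, h10, h20, h30, Hmat] using e 0 2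
  have h33 : Q 3 3 = 1 := by simpa [h00, h10, h20, h30, Hmat] using e 0 3
  have h11 := e 1 1
  have h12 := e 1 2
  have h22 := e 2 2
  have h13 := e 1 3
  have h23 := e 2 3
  have h33' := e 3 3
  simp only [h31, h32, h33, Hmat, of_apply, cons_val', cons_val, empty_val', cons_val_fin_one,
    map_zero, map_one, zero_mul, mul_zero, mul_one, one_mul, sub_zero, zero_add]
    at h11 h12 h22 h13 h23 h33'
  rw [add_assoc] at h13 h23 h33'
  obtain ⟨r, hx, hy⟩ := exists_exp_of_orthonormal hε h11 h12 h22
  have h01 := eq_neg_I_mul_conj_of_I_mul_conj_add_eq_zero h13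
  have h02 := eq_neg_I_mul_conj_of_I_mul_conj_add_eq_zero h23
  have h03 := eq_re_sub_of_I_mul_conj_sub_add_eq_zero h33'
  simp only [map_add, map_mul, conj_conj, hεc] at h01 h02
  simp only [mul_assoc, conj_mul'] at h03
  rw [hx, hy] at h02
  set t := (Q 0 3).re
  refine ⟨Q 1 1, Q 2 1, Q 1 3, Q 2 3, r, t, ?_, ?_⟩
  · rw [← conj_mul', ← conj_mul']
    linear_combination h11
  · ext i j
    fin_cases i <;> fin_cases j <;>
      simp [p0, h00, h10, h20, h30, h31, h32, h33, hx, hy, h01, h02, h03]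
    ring

/-- two Hermitian frames whose 0th columns are ℂ-collinear
(`W·e₀ = l V·e₀`, `l ≠ 0`) differ by a transformation `p_l p₀`. -/
theorem stmt7 (ε : ℂ) (hε : ε = 1 ∨ ε = -1) (V W : Matrix (Fin 4) (Fin 4) ℂ)
    (hV : Vᴴ * Hmat ε * V = Hmat ε) (hW : Wᴴ * Hmat ε * W = Hmat ε)
    (l : ℂ) (hl : l ≠ 0) (hcol : ∀ i, W i 0 = l * V i 0) :
    ∃ (a₁ a₂ c₁ c₂ : ℂ) (r t : ℝ),
      (‖a₁‖ : ℂ) ^ 2 + ε * (‖a₂‖ : ℂ) ^ 2 = 1 ∧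
      W = V * pl l * p0 ε a₁ a₂ c₁ c₂ r t := by
  set A := V * pl l
  have hA : Aᴴ * Hmat ε * A = Hmat ε :=
    conjTranspose_mul_mul_eq_of_mul hV (conjTranspose_pl_mul_Hmat_mul_pl ε hl)
  have hAdet : IsUnit A.det := by
    refine isUnit_det_of_conjTranspose_mul_mul_eq ?_ hA
    rw [det_Hmat]
    rcases hε with rfl | rfl <;> norm_num
  have hcolA (i : Fin 4) : W i 0 = A i 0 := by simp [A, pl, hcol, mul_comm]
  obtain ⟨a₁, a₂, c₁, c₂, r, t, hnorm, hQ⟩ :=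
    exists_eq_p0_of_conjTranspose_mul_Hmat_mul_eq hε
    (conjTranspose_mul_mul_eq_of_mul (conjTranspose_mul_mul_eq_of_inv hAdet hA) hW)
    (inv_mul_apply_of_apply_eq hAdet hcolA)
  refine ⟨a₁, a₂, c₁, c₂, r, t, hnorm, ?_⟩
  rw [← hQ, ← Matrix.mul_assoc, mul_nonsing_inv _ hAdet, Matrix.one_mul]
end

section
/- The set of 4×4 complex matrices X satisfying conj(X)ᵀ · H + H · X = 0 and X₁₀ = X₂₀ = X₃₀ = 0 (i.e., X preserves the complex line spanned by the standard basis vector e₀) is a real vector subspace of the 4×4 complex matrices of real dimension 11. -/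
open Matrix Complex ComplexConjugate

noncomputable def phi (ε : ℂ) : (ℂ × ℂ × ℂ × ℂ × ℝ × ℝ × ℝ) →ₗ[ℝ] Matrix (Fin 4) (Fin 4) ℂ where
  toFun p :=
    !![p.1, p.2.1, p.2.2.1, (p.2.2.2.2.1 : ℂ);
       0, (p.2.2.2.2.2.1 : ℂ) * I, -ε * conj p.2.2.2.1, -I * conj p.2.1;
       0, p.2.2.2.1, (p.2.2.2.2.2.2 : ℂ) * I, -I * ε * conj p.2.2.1;
       0, 0, 0, -conj p.1]
  map_add' p q := by
    ext i j
    fin_cases i <;> fin_cases j <;>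
      simp [Matrix.vecHead, Matrix.vecTail, map_add] <;> ring
  map_smul' r p := by
    ext i j
    fin_cases i <;> fin_cases j <;>
      simp [Matrix.vecHead, Matrix.vecTail, Complex.real_smul, _root_.map_mul,
        Complex.conj_ofReal] <;> ring

lemma phi_inj (ε : ℂ) : Function.Injective (phi ε) := by
  rw [← LinearMap.ker_eq_bot]
  apply LinearMap.ker_eq_bot'.mpr
  rintro ⟨a, b, c, d, r, s, t⟩ hp
  have h00 := congrFun (congrFun hp 0) 0
  have h01 := congrFun (congrFun hp 0) 1
  have h02 := congrFun (congrFun hp 0) 2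
  have h03 := congrFun (congrFun hp 0) 3
  have h11 := congrFun (congrFun hp 1) 1
  have h21 := congrFun (congrFun hp 2) 1
  have h22 := congrFun (congrFun hp 2) 2
  simp [phi, Matrix.vecHead, Matrix.vecTail, Complex.ext_iff] at h00 h01 h02 h03 h11 h21 h22
  simp [Prod.ext_iff, Complex.ext_iff, h00, h01, h02, h03, h11, h21, h22]

set_option maxHeartbeats 2000000 in
lemma phi_sat (ε : ℂ) (hε : ε = 1 ∨ ε = -1) (p : ℂ × ℂ × ℂ × ℂ × ℝ × ℝ × ℝ) :
    (phi ε p)ᴴ * Hmat ε + Hmat ε * (phi ε p) = 0 := by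
  rcases hε with h | h <;> subst h <;> ext i j <;> fin_cases i <;> fin_cases j <;>
    simp [phi, Hmat, mul_apply, Fin.sum_univ_four, conjTranspose_apply,
      Matrix.vecHead, Matrix.vecTail, _root_.map_mul] <;> ring_nf

set_option maxHeartbeats 1000000 in
lemma phi_surj (ε : ℂ) (hε : ε = 1 ∨ ε = -1) (X : Matrix (Fin 4) (Fin 4) ℂ)
    (h1 : Xᴴ * Hmat ε + Hmat ε * X = 0)
    (h10 : X 1 0 = 0) (h20 : X 2 0 = 0) (h30 : X 3 0 = 0) :
    ∃ p, phi ε p = X := by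
  refine ⟨(X 0 0, X 0 1, X 0 2, X 2 1, (X 0 3).re, (X 1 1).im, (X 2 2).im), ?_⟩
  have e01 := congrFun (congrFun h1 0) 1
  have e02 := congrFun (congrFun h1 0) 2
  have e03 := congrFun (congrFun h1 0) 3
  have e11 := congrFun (congrFun h1 1) 1
  have e12 := congrFun (congrFun h1 1) 2
  have e13 := congrFun (congrFun h1 1) 3
  have e22 := congrFun (congrFun h1 2) 2
  have e23 := congrFun (congrFun h1 2) 3
  have e33 := congrFun (congrFun h1 3) 3
  rcases hε with h | h <;> subst h <;>
    simp [Hmat, mul_apply, Fin.sum_univ_four, conjTranspose_apply, h10, h20, h30,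
      Matrix.vecMul, dotProduct, Matrix.vecHead, Matrix.vecTail]
      at e01 e02 e03 e11 e12 e13 e22 e23 e33 <;>
  · have f33 : X 3 3 = -conj (X 0 0) := by
      have h : Complex.I * (X 3 3 + conj (X 0 0)) = 0 := by linear_combination e03
      rcases mul_eq_zero.1 h with h | h
      · exact absurd h I_ne_zero
      · linear_combination h
    have f03 : X 0 3 = ((X 0 3).re : ℂ) := by
      have h : Complex.I * (conj (X 0 3) - X 0 3) = 0 := by linear_combination e33
      rcases mul_eq_zero.1 h with h | h
      · exact absurd h I_ne_zero
      · have : conj (X 0 3) = X 0 3 := by linear_combination h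
        exact (Complex.conj_eq_iff_re.1 this).symm
    have f11 : X 1 1 = ((X 1 1).im : ℂ) * Complex.I := by
      have hre : (X 1 1).re = 0 := by
        have := congrArg Complex.re e11
        simpa using this
      apply Complex.ext <;> simp [hre]
    have f22 : X 2 2 = ((X 2 2).im : ℂ) * Complex.I := by
      have hre : (X 2 2).re = 0 := by
        have := congrArg Complex.re e22
        simp at this
        linarith
      apply Complex.ext <;> simp [hre]
    ext i j
    fin_cases i <;> fin_cases j <;>
      simp [phi, Matrix.vecHead, Matrix.vecTail] <;>
      first
      | rfl
      | exact h10.symm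
      | exact h20.symm
      | exact h30.symm
      | exact e01.symm
      | exact e02.symm
      | exact f03.symm
      | exact f11.symm
      | exact f22.symm
      | exact f33.symm
      | linear_combination e12
      | linear_combination -e12
      | linear_combination e13
      | linear_combination -e13
      | linear_combination e23
      | linear_combination -e23

/-- the set of `X` with `conj(X)ᵀ H + H X = 0` and
`X₁₀ = X₂₀ = X₃₀ = 0` (i.e. `X` preserves the line `ℂ·e₀`) is a real
vector subspace of the 4×4 complex matrices of real dimension 11. -/
theorem stmt8 (ε : ℂ) (hε : ε = 1 ∨ ε = -1) :
    ∃ S : Submodule ℝ (Matrix (Fin 4) (Fin 4) ℂ),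
      (S : Set (Matrix (Fin 4) (Fin 4) ℂ)) =
        {X | Xᴴ * Hmat ε + Hmat ε * X = 0 ∧ X 1 0 = 0 ∧ X 2 0 = 0 ∧ X 3 0 = 0} ∧
      Module.finrank ℝ S = 11 := by
  refine ⟨LinearMap.range (phi ε), ?_, ?_⟩
  · ext X
    simp only [SetLike.mem_coe, LinearMap.mem_range, Set.mem_setOf_eq]
    constructor
    · rintro ⟨p, rfl⟩
      refine ⟨phi_sat ε hε p, ?_, ?_, ?_⟩ <;> simp [phi, Matrix.vecHead, Matrix.vecTail]
    · rintro ⟨h1, h10, h20, h30⟩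
      exact phi_surj ε hε X h1 h10 h20 h30
  · rw [LinearMap.finrank_range_of_inj (phi_inj ε)]
    simp [Module.finrank_prod, Complex.finrank_real_complex]
end

section
/- The set of 4×4 complex matrices X satisfying conj(X)ᵀ · H' + H' · X = 0, trace(X) = 0, and X₁₀ = X₂₀ = X₃₀ = 0 is a real vector subspace of the 4×4 complex matrices of real dimension 10. Moreover, every such X also satisfies X₃₁ = X₃₂ = 0, so X stabilizes the partial flag span_ℂ{e₀} ⊂ span_ℂ{e₀, e₁, e₂} ⊂ ℂ⁴. -/
open Matrix Complex ComplexConjugate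

/-- The matrix `H'` with rows `(0,0,0,-1), (0,0,i,0), (0,-i,0,0), (-1,0,0,0)`. -/
noncomputable def Hmat' : Matrix (Fin 4) (Fin 4) ℂ :=
  !![0, 0, 0, -1;
     0, 0, I, 0;
     0, -I, 0, 0;
     -1, 0, 0, 0]

noncomputable def phi9 : (Fin 10 → ℝ) →ₗ[ℝ] Matrix (Fin 4) (Fin 4) ℂ where
  toFun c := !![(c 0 : ℂ) + c 1 * I, (c 3 : ℂ) + c 4 * I, (c 5 : ℂ) + c 6 * I, (c 7 : ℂ) * I;
                0, (c 2 : ℂ) - c 1 * I, (c 8 : ℂ), (c 6 : ℂ) + c 5 * I;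
                0, (c 9 : ℂ), -(c 2 : ℂ) - c 1 * I, -(c 4 : ℂ) - c 3 * I;
                0, 0, 0, -(c 0 : ℂ) + c 1 * I]
  map_add' x y := by
    ext i j
    fin_cases i <;> fin_cases j <;> simp [Matrix.vecHead, Matrix.vecTail] <;> ring
  map_smul' r x := by
    ext i j
    fin_cases i <;> fin_cases j <;>
      simp [Matrix.smul_apply, Complex.real_smul, Matrix.vecHead, Matrix.vecTail] <;> ring

lemma phi9_apply (c : Fin 10 → ℝ) :
    phi9 c = !![(c 0 : ℂ) + c 1 * I, (c 3 : ℂ) + c 4 * I, (c 5 : ℂ) + c 6 * I, (c 7 : ℂ) * I;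
                0, (c 2 : ℂ) - c 1 * I, (c 8 : ℂ), (c 6 : ℂ) + c 5 * I;
                0, (c 9 : ℂ), -(c 2 : ℂ) - c 1 * I, -(c 4 : ℂ) - c 3 * I;
                0, 0, 0, -(c 0 : ℂ) + c 1 * I] := rfl

lemma phi9_mem (c : Fin 10 → ℝ) :
    (phi9 c)ᴴ * Hmat' + Hmat' * (phi9 c) = 0 ∧ (phi9 c).trace = 0 ∧
    phi9 c 1 0 = 0 ∧ phi9 c 2 0 = 0 ∧ phi9 c 3 0 = 0 := by
  rw [phi9_apply]
  refine ⟨?_, ?_, ?_, ?_, ?_⟩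
  · ext i j
    fin_cases i <;> fin_cases j <;>
      simp [Hmat', Matrix.mul_apply, Fin.sum_univ_four, Matrix.conjTranspose_apply,
        Matrix.vecMul, dotProduct, Matrix.vecHead, Matrix.vecTail, map_add, _root_.map_mul,
        map_sub, Complex.conj_ofReal] <;> ring_nf <;> simp [Complex.I_sq]
  · simp [Matrix.trace, Matrix.diag, Fin.sum_univ_four, Matrix.vecHead, Matrix.vecTail]
    ring
  · simp
  · simp [Matrix.vecHead, Matrix.vecTail]
  · simp [Matrix.vecHead, Matrix.vecTail]

lemma phi9_surj (X : Matrix (Fin 4) (Fin 4) ℂ) (h : Xᴴ * Hmat' + Hmat' * X = 0)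
    (ht : X.trace = 0) (h10 : X 1 0 = 0) (h20 : X 2 0 = 0) (h30 : X 3 0 = 0) :
    phi9 ![(X 0 0).re, (X 0 0).im, (X 1 1).re, (X 0 1).re, (X 0 1).im,
           (X 0 2).re, (X 0 2).im, (X 0 3).im, (X 1 2).re, (X 2 1).re] = X := by
  have h01 := congrArg (fun M => M 0 1) h
  have h02 := congrArg (fun M => M 0 2) h
  have h03 := congrArg (fun M => M 0 3) h
  have h11 := congrArg (fun M => M 1 1) h
  have h12 := congrArg (fun M => M 1 2) h
  have h13 := congrArg (fun M => M 1 3) h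
  have h22 := congrArg (fun M => M 2 2) h
  have h23 := congrArg (fun M => M 2 3) h
  have h33 := congrArg (fun M => M 3 3) h
  simp only [Matrix.trace, Matrix.diag, Fin.sum_univ_four] at ht
  simp [Hmat', Matrix.mul_apply, Fin.sum_univ_four, Matrix.conjTranspose_apply,
    Matrix.vecMul, dotProduct, Matrix.vecHead, Matrix.vecTail, h10, h20, h30,
    Complex.ext_iff] at h01 h02 h03 h11 h12 h13 h22 h23 h33 ht
  have e5 : (![(X 0 0).re, (X 0 0).im, (X 1 1).re, (X 0 1).re, (X 0 1).im,
      (X 0 2).re, (X 0 2).im, (X 0 3).im, (X 1 2).re, (X 2 1).re] : Fin 10 → ℝ) 5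
      = (X 0 2).re := rfl
  have e6 : (![(X 0 0).re, (X 0 0).im, (X 1 1).re, (X 0 1).re, (X 0 1).im,
      (X 0 2).re, (X 0 2).im, (X 0 3).im, (X 1 2).re, (X 2 1).re] : Fin 10 → ℝ) 6
      = (X 0 2).im := rfl
  rw [phi9_apply]
  ext i j
  fin_cases i <;> fin_cases j <;>
    simp [Matrix.vecHead, Matrix.vecTail, Complex.ext_iff, h10, h20, h30] <;>
    first
      | rfl
      | linarith [h01.1, h01.2, h02.1, h02.2, h03.1, h03.2, h11, h12.1,
          h12.2, h13.1, h13.2, h22, h23.1, h23.2, h33, ht.1, ht.2, e5, e6]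
      | (constructor <;>
          first
            | rfl
            | linarith [h01.1, h01.2, h02.1, h02.2, h03.1, h03.2, h11, h12.1,
                h12.2, h13.1, h13.2, h22, h23.1, h23.2, h33, ht.1, ht.2, e5, e6])

lemma phi9_inj : Function.Injective phi9 := by
  rw [← LinearMap.ker_eq_bot]
  rw [LinearMap.ker_eq_bot']
  intro c hc
  have e q p := congrArg (fun M => M q p) hc
  funext i
  fin_cases i
  · have := e 0 0; simp [phi9_apply, Complex.ext_iff] at this; simpa using this.1
  · have := e 0 0; simp [phi9_apply, Complex.ext_iff] at this; simpa using this.2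
  · have := e 1 1; simp [phi9_apply, Matrix.vecHead, Matrix.vecTail, Complex.ext_iff] at this
    simpa using this.1
  · have := e 0 1; simp [phi9_apply, Complex.ext_iff] at this; simpa using this.1
  · have := e 0 1; simp [phi9_apply, Complex.ext_iff] at this; simpa using this.2
  · have := e 0 2; simp [phi9_apply, Complex.ext_iff] at this; simpa using this.1
  · have := e 0 2; simp [phi9_apply, Complex.ext_iff] at this; simpa using this.2
  · have := e 0 3; simp [phi9_apply, Complex.ext_iff] at this; simpa using this
  · have := e 1 2; simp [phi9_apply, Matrix.vecHead, Matrix.vecTail, Complex.ext_iff] at this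
    simpa using this
  · have := e 2 1; simp [phi9_apply, Matrix.vecHead, Matrix.vecTail, Complex.ext_iff] at this
    simpa using this

/-- the set of trace-free `X` with `conj(X)ᵀ H' + H' X = 0` and
`X₁₀ = X₂₀ = X₃₀ = 0` is a real subspace of real dimension 10; moreover each such `X`
also satisfies `X₃₁ = X₃₂ = 0`, so `X` stabilizes the partial flag
`ℂ·e₀ ⊂ span{e₀,e₁,e₂} ⊂ ℂ⁴`. -/
theorem stmt9 :
    (∃ S : Submodule ℝ (Matrix (Fin 4) (Fin 4) ℂ),
      (S : Set (Matrix (Fin 4) (Fin 4) ℂ)) =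
        {X | Xᴴ * Hmat' + Hmat' * X = 0 ∧ X.trace = 0 ∧
             X 1 0 = 0 ∧ X 2 0 = 0 ∧ X 3 0 = 0} ∧
      Module.finrank ℝ S = 10) ∧
    ∀ X : Matrix (Fin 4) (Fin 4) ℂ,
      Xᴴ * Hmat' + Hmat' * X = 0 → X.trace = 0 →
      X 1 0 = 0 → X 2 0 = 0 → X 3 0 = 0 →
      X 3 1 = 0 ∧ X 3 2 = 0 := by
  constructor
  · refine ⟨LinearMap.range phi9, ?_, ?_⟩
    · ext X
      simp only [SetLike.mem_coe, LinearMap.mem_range, Set.mem_setOf_eq]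
      constructor
      · rintro ⟨c, rfl⟩
        exact phi9_mem c
      · rintro ⟨h, ht, h10, h20, h30⟩
        exact ⟨_, phi9_surj X h ht h10 h20 h30⟩
    · rw [LinearMap.finrank_range_of_inj phi9_inj, Module.finrank_fin_fun]
  · intro X h ht h10 h20 h30
    have h01 := congrArg (fun M => M 0 1) h
    have h02 := congrArg (fun M => M 0 2) h
    simp [Hmat', Matrix.mul_apply, Fin.sum_univ_four, Matrix.conjTranspose_apply,
      Matrix.vecMul, dotProduct, Matrix.vecHead, Matrix.vecTail, h10, h20, h30,
      Complex.ext_iff] at h01 h02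
    exact ⟨Complex.ext (by simpa using h01.1) (by simpa using h01.2),
      Complex.ext (by simpa using h02.1) (by simpa using h02.2)⟩
end
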